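/- For all integers i \geq -1 and j \geq -1, D(i, j + 1/2) = \sum_{\ell=0}^{\lceil i/2 \rceil} (-1)^{\ell} \binom{-1/2}{\ell} H(i - 2\ell, j), where D(i,x) = \sum_{m=0}^{i}\binom{i}{m}\binom{x}{m}2^{m} for i \geq 0 (and D(-1,x)=0), and H(i,j) = D(i,j) + D(i-1,j) for i,j \geq 0, with H(0,-1)=1 and H(i,j)=0 for i<0 or (j<0, (i,j)\neq(0,-1)). -/

import Mathlib

/-!
Both sides satisfy the Delannoy recurrence `f(i,j) = f(i-1,j) + f(i,j-1) + f(i-1,j-1)` for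
`j ≥ 0` and vanish for `i < 0`: on the left this is Pascal's rule for `binom(x, m)`, on the right
it is the recurrence of the Delannoy numbers, whose boundary term at `(0,0)` is absorbed by
`H(0,-1) = 1`. It therefore suffices to compare the two sides at `j = -1`, i.e. at `x = -1/2`.
There `∑ D(n,x) tⁿ = (1+t)^x / (1-t)^(x+1)` becomes `(1-t²)^(-1/2)`, so
`D(2k,-1/2) = (-1)^k binom(-1/2,k)` and `D(2k+1,-1/2) = 0`; instead of generating functions we
use the equivalent recurrence `(n+2) D(n+2,-1/2) = (n+1) D(n,-1/2)`, proved by a telescoping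
certificate.
-/

/-- The Delannoy numbers on natural numbers. -/
def del : ℕ → ℕ → ℕ
  | 0, 0 => 1
  | 0, j+1 => del 0 j
  | i+1, 0 => del i 0
  | i+1, j+1 => del i (j+1) + del (i+1) j + del i j
termination_by i j => i + j

/-- The Delannoy numbers extended to all integers: `0` if either argument is negative. -/
def Dint (i j : ℤ) : ℤ := if i < 0 ∨ j < 0 then 0 else del i.toNat j.toNat

/-- `H(i,j) = D(i,j) + D(i-1,j)` for `i, j ≥ 0`, with `H(0,-1) = 1` and `H = 0`
for other negative arguments. -/
def Hfun (i j : ℤ) : ℤ :=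
  if i = 0 ∧ j = -1 then 1
  else if i < 0 ∨ j < 0 then 0
  else Dint i j + Dint (i-1) j

/-- Generalized binomial coefficient `x(x-1)⋯(x-m+1)/m!` for real `x`. -/
noncomputable def rchoose (x : ℝ) (m : ℕ) : ℝ :=
  (∏ t ∈ Finset.range m, (x - t)) / Nat.factorial m

/-- The polynomial extension of the Delannoy numbers in the second argument,
with `D(i, x) = 0` for `i < 0`. -/
noncomputable def DR (i : ℤ) (x : ℝ) : ℝ :=
  if i < 0 then 0
  else ∑ m ∈ Finset.range (i.toNat + 1), (Nat.choose i.toNat m : ℝ) * rchoose x m * 2 ^ m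

lemma cast_choose_succ_mul {R : Type*} [Ring R] (n k : ℕ) :
    (n.choose (k + 1) : R) * (k + 1) = n.choose k * (n - k) := by
  rcases le_or_gt k n with hk | hk
  · rw [← Nat.cast_sub hk]
    exact_mod_cast congrArg (Nat.cast (R := R)) (Nat.choose_succ_right_eq n k)
  · simp [Nat.choose_eq_zero_of_lt hk, Nat.choose_eq_zero_of_lt (Nat.lt_succ_of_lt hk)]

lemma cast_choose_mul_succ {R : Type*} [Ring R] (n k : ℕ) :
    (n.choose k : R) * (n + 1) = (n + 1).choose k * (n + 1 - k) := by
  rcases le_or_gt k (n + 1) with hk | hk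
  · rw [← Nat.cast_succ, ← Nat.cast_sub hk]
    exact_mod_cast congrArg (Nat.cast (R := R)) (Nat.choose_mul_succ_eq n k)
  · simp [Nat.choose_eq_zero_of_lt hk, Nat.choose_eq_zero_of_lt (Nat.lt_of_succ_lt hk)]

lemma rchoose_zero (x : ℝ) : rchoose x 0 = 1 := by
  simp [rchoose]

lemma rchoose_succ (x : ℝ) (m : ℕ) : rchoose x (m + 1) = rchoose x m * (x - m) / (m + 1) := by
  simp only [rchoose, Finset.prod_range_succ, Nat.factorial_succ]
  push_cast
  field_simp

lemma rchoose_succ_eq_rchoose_sub_one (x : ℝ) (m : ℕ) :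
    rchoose x (m + 1) = rchoose (x - 1) (m + 1) + rchoose (x - 1) m := by
  have hshift : ∏ t ∈ Finset.range (m + 1), (x - t) = x * ∏ t ∈ Finset.range m, (x - 1 - t) := by
    rw [Finset.prod_range_succ', mul_comm]
    congr 1
    · simp
    · refine Finset.prod_congr rfl fun t _ => ?_
      push_cast
      ring
  simp only [rchoose, hshift, Finset.prod_range_succ, Nat.factorial_succ]
  push_cast
  field_simp
  ring

noncomputable def delPoly (n : ℕ) (x : ℝ) : ℝ :=
  ∑ m ∈ Finset.range (n + 1), (n.choose m : ℝ) * rchoose x m * 2 ^ m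

lemma delPoly_eq_sum_range {n M : ℕ} (hM : n < M) (x : ℝ) :
    delPoly n x = ∑ m ∈ Finset.range M, (n.choose m : ℝ) * rchoose x m * 2 ^ m := by
  refine Finset.sum_subset (Finset.range_subset_range.mpr hM) fun m _ hm => ?_
  rw [Nat.choose_eq_zero_of_lt (by simpa using hm), Nat.cast_zero, zero_mul, zero_mul]

lemma DR_of_neg {i : ℤ} (hi : i < 0) (x : ℝ) : DR i x = 0 := by
  simp [DR, hi]

lemma DR_of_nonneg {i : ℤ} (hi : 0 ≤ i) (x : ℝ) : DR i x = delPoly i.toNat x := by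
  simp [DR, delPoly, hi]

lemma delPoly_sub_delPoly_sub_one (n : ℕ) (x : ℝ) :
    delPoly n x - delPoly n (x - 1) =
      ∑ m ∈ Finset.range n, (n.choose (m + 1) : ℝ) * rchoose (x - 1) m * 2 ^ (m + 1) := by
  rw [delPoly, delPoly, ← Finset.sum_sub_distrib, Finset.sum_range_succ']
  simp only [rchoose_zero, sub_self, add_zero, rchoose_succ_eq_rchoose_sub_one x]
  refine Finset.sum_congr rfl fun m _ => ?_
  ring

lemma delPoly_succ (n : ℕ) (x : ℝ) :
    delPoly (n + 1) x = delPoly n x + delPoly (n + 1) (x - 1) + delPoly n (x - 1) := by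
  suffices delPoly (n + 1) x - delPoly (n + 1) (x - 1) =
      2 * delPoly n (x - 1) + (delPoly n x - delPoly n (x - 1)) by linarith
  have htop : ∑ m ∈ Finset.range n, (n.choose (m + 1) : ℝ) * rchoose (x - 1) m * 2 ^ (m + 1) =
      ∑ m ∈ Finset.range (n + 1), (n.choose (m + 1) : ℝ) * rchoose (x - 1) m * 2 ^ (m + 1) := by
    simp [Finset.sum_range_succ _ n]
  rw [delPoly_sub_delPoly_sub_one, delPoly_sub_delPoly_sub_one, htop, delPoly, Finset.mul_sum,
    ← Finset.sum_add_distrib]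
  refine Finset.sum_congr rfl fun m _ => ?_
  rw [Nat.choose_succ_succ, Nat.cast_add]
  ring

lemma DR_rec (i : ℤ) (x : ℝ) : DR i x = DR (i - 1) x + DR i (x - 1) + DR (i - 1) (x - 1) := by
  rcases lt_trichotomy i 0 with hi | rfl | hi
  · simp [DR_of_neg hi, DR_of_neg (show i - 1 < 0 by omega)]
  · simp [DR_of_nonneg le_rfl, DR_of_neg (show (-1 : ℤ) < 0 by omega), delPoly, rchoose_zero]
  · obtain ⟨n, rfl⟩ : ∃ n : ℕ, i = n + 1 := ⟨(i - 1).toNat, by omega⟩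
    simp only [DR_of_nonneg (show (0 : ℤ) ≤ n + 1 by omega), add_sub_cancel_right,
      DR_of_nonneg (Int.natCast_nonneg n)]
    exact delPoly_succ n x

lemma Dint_rec (i j : ℤ) :
    Dint i j = Dint (i - 1) j + Dint i (j - 1) + Dint (i - 1) (j - 1)
      + if i = 0 ∧ j = 0 then 1 else 0 := by
  rcases lt_or_ge i 0 with hi | hi
  · simp [Dint, hi, show i - 1 < 0 by omega, hi.ne]
  rcases lt_or_ge j 0 with hj | hj
  · simp [Dint, hj, show j - 1 < 0 by omega, hj.ne]
  lift i to ℕ using hi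
  lift j to ℕ using hj
  have hnonneg (n : ℕ) : ¬ ((n : ℤ) + 1 < 0) := by omega
  rcases i with _ | a <;> rcases j with _ | b <;> simp [Dint, del, hnonneg] <;> omega

lemma Hfun_eq (i j : ℤ) :
    Hfun i j = Dint i j + Dint (i - 1) j + if i = 0 ∧ j = -1 then 1 else 0 := by
  unfold Hfun
  split_ifs <;> simp_all [Dint]; omega

lemma Hfun_of_neg {i : ℤ} (hi : i < 0) (j : ℤ) : Hfun i j = 0 := by
  simp [Hfun, hi, hi.ne]

lemma Hfun_neg_one (i : ℤ) : Hfun i (-1) = if i = 0 then 1 else 0 := by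
  simp [Hfun_eq, Dint]

lemma Hfun_rec (i : ℤ) {j : ℤ} (hj : 0 ≤ j) :
    Hfun i j = Hfun (i - 1) j + Hfun i (j - 1) + Hfun (i - 1) (j - 1) := by
  rw [Hfun_eq, Hfun_eq (i - 1), Hfun_eq i, Hfun_eq (i - 1), Dint_rec i j, Dint_rec (i - 1) j]
  split_ifs <;> omega

lemma rchoose_neg_half_succ_mul (m : ℕ) :
    (m + 1) * (rchoose (-1/2) (m + 1) * 2 ^ (m + 1)) =
      -(2 * m + 1) * (rchoose (-1/2) m * 2 ^ m) := by
  rw [rchoose_succ]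
  field_simp
  ring

lemma delPoly_neg_half_add_two (n : ℕ) :
    (n + 2) * delPoly (n + 2) (-1/2) = (n + 1) * delPoly n (-1/2) := by
  let a (m : ℕ) : ℝ := rchoose (-1/2) m * 2 ^ m
  -- Zeilberger certificate: the summands of `(n+2)² D(n+2) - (n+2)(n+1) D(n)` telescope.
  let G (m : ℕ) : ℝ := -(m ^ 2 : ℝ) * (n + 2).choose m * a m
  have hstep (m : ℕ) : (n + 2) ^ 2 * ((n + 2).choose m * rchoose (-1/2) m * 2 ^ m)
      - (n + 2) * (n + 1) * (n.choose m * rchoose (-1/2) m * 2 ^ m) = G (m + 1) - G m := by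
    have h1 : ((n + 2).choose (m + 1) : ℝ) * (m + 1) = (n + 2).choose m * (n + 2 - m) := by
      exact_mod_cast cast_choose_succ_mul (n + 2) m
    have h2 : (n.choose m : ℝ) * (n + 1) = (n + 1).choose m * (n + 1 - m) :=
      cast_choose_mul_succ n m
    have h3 : ((n + 1).choose m : ℝ) * (n + 2) = (n + 2).choose m * (n + 2 - m) := by
      have := cast_choose_mul_succ (R := ℝ) (n + 1) m
      push_cast at this
      linear_combination this
    simp only [G, a]
    push_cast
    linear_combination (m + 1) * (rchoose (-1/2) (m + 1) * 2 ^ (m + 1)) * h1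
      + (n + 2).choose m * (n + 2 - m) * rchoose_neg_half_succ_mul m
      - (n + 2) * a m * h2 - (n + 1 - m) * a m * h3
  have htelescope :
      (n + 2) * ((n + 2) * delPoly (n + 2) (-1/2) - (n + 1) * delPoly n (-1/2)) = 0 := by
    rw [delPoly_eq_sum_range (show n < n + 2 + 1 by omega), delPoly, mul_sub, ← mul_assoc,
      ← mul_assoc, ← sq, Finset.mul_sum, Finset.mul_sum, ← Finset.sum_sub_distrib]
    rw [Finset.sum_congr rfl fun m _ => hstep m, Finset.sum_range_sub]
    simp [G]
  have hn : (n : ℝ) + 2 ≠ 0 := by positivity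
  linear_combination (mul_eq_zero.mp htelescope).resolve_left hn

lemma delPoly_neg_half_two_mul (k : ℕ) :
    delPoly (2 * k) (-1/2) = (-1) ^ k * rchoose (-1/2) k := by
  induction k with
  | zero => simp [delPoly, rchoose_zero]
  | succ k ih =>
    have hrec := delPoly_neg_half_add_two (2 * k)
    rw [ih] at hrec
    rw [show 2 * (k + 1) = 2 * k + 2 by ring, rchoose_succ]
    push_cast at hrec
    generalize rchoose (-1/2) k = r at hrec ⊢
    generalize delPoly (2 * k + 2) (-1/2) = d at hrec ⊢
    have hk : (k : ℝ) + 1 ≠ 0 := by positivity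
    field_simp
    linear_combination hrec

lemma delPoly_neg_half_two_mul_add_one (k : ℕ) : delPoly (2 * k + 1) (-1/2) = 0 := by
  induction k with
  | zero => simp [delPoly, Finset.sum_range_succ, rchoose_succ, rchoose_zero]
  | succ k ih =>
    have hrec := delPoly_neg_half_add_two (2 * k + 1)
    rw [ih, mul_zero] at hrec
    rw [show 2 * (k + 1) + 1 = 2 * k + 1 + 2 by ring]
    exact (mul_eq_zero.mp hrec).resolve_left (by positivity)

lemma DR_neg_half_eq_sum {i : ℤ} (hi : 0 ≤ i) {N : ℕ} (hN : i < 2 * N) :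
    DR i (-1/2) =
      ∑ ℓ ∈ Finset.range N, (-1) ^ ℓ * rchoose (-1/2) ℓ * (Hfun (i - 2 * ℓ) (-1) : ℝ) := by
  simp only [Hfun_neg_one, DR_of_nonneg hi, sub_eq_zero]
  rcases Int.even_or_odd' i with ⟨k, rfl | rfl⟩
  · have hk : (2 * k).toNat = 2 * k.toNat := by omega
    rw [hk, delPoly_neg_half_two_mul, Finset.sum_eq_single_of_mem k.toNat (by simp; omega)]
    · simp [show 2 * k = 2 * (k.toNat : ℤ) by omega]
    · intro ℓ _ hℓ
      simp [show 2 * k ≠ 2 * (ℓ : ℤ) by omega]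
  · have hk : (2 * k + 1).toNat = 2 * k.toNat + 1 := by omega
    rw [hk, delPoly_neg_half_two_mul_add_one]
    refine (Finset.sum_eq_zero fun ℓ _ => ?_).symm
    simp [show 2 * k + 1 ≠ 2 * (ℓ : ℤ) by omega]

theorem DR_half_eq_sum_Hfun (i : ℤ) {j : ℤ} (hj : -1 ≤ j) {N : ℕ} (hN : i < 2 * N) :
    DR i ((j : ℝ) + 1/2) =
      ∑ ℓ ∈ Finset.range N, (-1) ^ ℓ * rchoose (-1/2) ℓ * (Hfun (i - 2 * ℓ) j : ℝ) := by
  rcases lt_or_ge i 0 with hi | hi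
  · rw [DR_of_neg hi]
    refine (Finset.sum_eq_zero fun ℓ _ => ?_).symm
    simp [Hfun_of_neg (show i - 2 * (ℓ : ℤ) < 0 by omega)]
  rcases hj.eq_or_lt with rfl | hj
  · rw [show ((-1 : ℤ) : ℝ) + 1/2 = -1/2 by norm_num]
    exact DR_neg_half_eq_sum hi hN
  have hx : (j : ℝ) + 1/2 - 1 = ((j - 1 : ℤ) : ℝ) + 1/2 := by push_cast; ring
  rw [DR_rec, hx, DR_half_eq_sum_Hfun (i - 1) hj.le (N := N) (by omega),
    DR_half_eq_sum_Hfun i (by omega : -1 ≤ j - 1) hN,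
    DR_half_eq_sum_Hfun (i - 1) (by omega : -1 ≤ j - 1) (N := N) (by omega),
    ← Finset.sum_add_distrib, ← Finset.sum_add_distrib]
  refine Finset.sum_congr rfl fun ℓ _ => ?_
  rw [Hfun_rec (i - 2 * ℓ) (by omega : 0 ≤ j), sub_right_comm i (2 * (ℓ : ℤ)) 1]
  push_cast
  ring
termination_by (i + j + 2).toNat
decreasing_by all_goals omega

theorem stmt9_general (i j : ℤ) (hj : -1 ≤ j) :
    DR i ((j : ℝ) + 1/2) =
      ∑ ℓ ∈ Finset.range (((i+1)/2).toNat + 1),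
        (-1) ^ ℓ * rchoose (-1/2) ℓ * (Hfun (i - 2*ℓ) j : ℝ) :=
  DR_half_eq_sum_Hfun i hj (by omega)

theorem stmt9 (i j : ℤ) (hi : -1 ≤ i) (hj : -1 ≤ j) :
    DR i ((j : ℝ) + 1/2) =
      ∑ ℓ ∈ Finset.range (((i+1)/2).toNat + 1),
        (-1) ^ ℓ * rchoose (-1/2) ℓ * (Hfun (i - 2*ℓ) j : ℝ) :=
  stmt9_general i j hj
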